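/- Crossings + nestings = overlaps + coverings: for every partition π of [n], crop(π) + neop(π) = ov(π) + cov(π), and crin(π) + nein(π) = ovin(π) + covin(π). -/

import Mathlib

namespace Paper

/-! ### Motzkin paths, Dyck paths, and Flajolet's continued-fraction weights -/

inductive MStep : Type
  | up : MStep
  | down : MStep
  | flat : MStep
  deriving DecidableEq

instance instFintypeMStep : Fintype MStep :=
  ⟨{MStep.up, MStep.down, MStep.flat}, fun x => by cases x <;> simp⟩

noncomputable section

/-- Height increment of a single step. -/
def MStep.val : MStep → ℤ
  | .up => 1
  | .down => -1
  | .flat => 0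

/-- The height of the lattice path `ω` after its first `i` steps. -/
def height {n : ℕ} (ω : Fin n → MStep) (i : ℕ) : ℤ :=
  ∑ j ∈ Finset.univ.filter (fun j : Fin n => (j : ℕ) < i), (ω j).val

open Classical in
/-- Motzkin paths of length `n`: lattice paths from `(0,0)` to `(n,0)` with steps
`(1,1)`, `(1,-1)` and `(1,0)`, staying at heights `≥ 0`. -/
def motzkinPaths (n : ℕ) : Finset (Fin n → MStep) :=
  Finset.univ.filter fun ω =>
    (∀ i ∈ Finset.range (n + 1), 0 ≤ height ω i) ∧ height ω n = 0

/-- Dyck paths of length `n`: Motzkin paths having no level step. -/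
def dyckPaths (n : ℕ) : Finset (Fin n → MStep) :=
  (motzkinPaths n).filter fun ω => ∀ i, ω i ≠ MStep.flat

/-- The weight of a Motzkin path for the J-type continued fraction with coefficients
`γ` (one factor `γ h` for each level step at height `h`) and `β` (one factor `β h`
for each fall starting at height `h`); rises have weight `1`. -/
def jweight {R : Type*} [CommRing R] {n : ℕ} (γ β : ℕ → R) (ω : Fin n → MStep) : R :=
  ∏ i : Fin n,
    match ω i with
    | MStep.up => (1 : R)
    | MStep.down => β (height ω (i : ℕ)).toNat
    | MStep.flat => γ (height ω (i : ℕ)).toNat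

/-- The weight of a Dyck path for the S-type continued fraction with coefficients `α`
(one factor `α h` for each fall starting at height `h`); rises have weight `1`. -/
def sweight {R : Type*} [CommRing R] {n : ℕ} (α : ℕ → R) (ω : Fin n → MStep) : R :=
  ∏ i : Fin n,
    match ω i with
    | MStep.up => (1 : R)
    | MStep.down => α (height ω (i : ℕ)).toNat
    | MStep.flat => (0 : R)

/-- The `(p,q)`-integer `[m]_{p,q} = ∑_{j=0}^{m-1} p^j q^(m-1-j)`. -/
def qint {R : Type*} [CommRing R] (p q : R) (m : ℕ) : R :=
  ∑ j ∈ Finset.range m, p ^ j * q ^ (m - 1 - j)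

/-- `starSum f m = ∑_{ℓ=0}^{m} f ℓ (m-ℓ)`. -/
def starSum {R : Type*} [CommRing R] (f : ℕ → ℕ → R) (m : ℕ) : R :=
  ∑ ℓ ∈ Finset.range (m + 1), f ℓ (m - ℓ)

/-- `rowSum f m = ∑_{ℓ=0}^{m} f m ℓ`. -/
def rowSum {R : Type*} [CommRing R] (f : ℕ → ℕ → R) (m : ℕ) : R :=
  ∑ ℓ ∈ Finset.range (m + 1), f m ℓ

/-! ### Generic counting helpers -/

/-- The number of indices `i : Fin n` satisfying `P i`. -/
def cnt {n : ℕ} (P : Fin n → Prop) : ℕ := Nat.card {i : Fin n // P i}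

/-- The number of quadruplets `i < j < k < l` satisfying `C i j k l`. -/
def quad {n : ℕ} (C : Fin n → Fin n → Fin n → Fin n → Prop) : ℕ :=
  Nat.card {q : Fin n × Fin n × Fin n × Fin n //
    q.1 < q.2.1 ∧ q.2.1 < q.2.2.1 ∧ q.2.2.1 < q.2.2.2 ∧ C q.1 q.2.1 q.2.2.1 q.2.2.2}

/-- The number of triplets `i < j < l` satisfying `C i j l`. -/
def trip {n : ℕ} (C : Fin n → Fin n → Fin n → Prop) : ℕ :=
  Nat.card {q : Fin n × Fin n × Fin n // q.1 < q.2.1 ∧ q.2.1 < q.2.2 ∧ C q.1 q.2.1 q.2.2}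

/-! ### Permutation statistics -/

variable {n : ℕ}

/-- `i` is a record of `σ`. -/
def isRec (σ : Equiv.Perm (Fin n)) (i : Fin n) : Prop := ∀ j, j < i → σ j < σ i

/-- `i` is an antirecord of `σ`. -/
def isArec (σ : Equiv.Perm (Fin n)) (i : Fin n) : Prop := ∀ j, i < j → σ i < σ j

/-- `i` is an exclusive record of `σ`. -/
def isERec (σ : Equiv.Perm (Fin n)) (i : Fin n) : Prop := isRec σ i ∧ ¬ isArec σ i

/-- `i` is an exclusive antirecord of `σ`. -/
def isEArec (σ : Equiv.Perm (Fin n)) (i : Fin n) : Prop := isArec σ i ∧ ¬ isRec σ i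

/-- `i` is a neither-record-antirecord of `σ`. -/
def isNrar (σ : Equiv.Perm (Fin n)) (i : Fin n) : Prop := ¬ isRec σ i ∧ ¬ isArec σ i

/-- `i` is a cycle valley of `σ`. -/
def isCval (σ : Equiv.Perm (Fin n)) (i : Fin n) : Prop := i < σ i ∧ i < σ⁻¹ i

/-- `i` is a cycle peak of `σ`. -/
def isCpeak (σ : Equiv.Perm (Fin n)) (i : Fin n) : Prop := σ i < i ∧ σ⁻¹ i < i

/-- `i` is a cycle double rise of `σ`. -/
def isCdrise (σ : Equiv.Perm (Fin n)) (i : Fin n) : Prop := σ⁻¹ i < i ∧ i < σ i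

/-- `i` is a cycle double fall of `σ`. -/
def isCdfall (σ : Equiv.Perm (Fin n)) (i : Fin n) : Prop := σ i < i ∧ i < σ⁻¹ i

/-- `i` is a fixed point of `σ`. -/
def isFix (σ : Equiv.Perm (Fin n)) (i : Fin n) : Prop := σ i = i

instance (σ : Equiv.Perm (Fin n)) : DecidablePred (isCval σ) := fun i =>
  inferInstanceAs (Decidable (i < σ i ∧ i < σ⁻¹ i))

instance (σ : Equiv.Perm (Fin n)) : DecidablePred (isCpeak σ) := fun i =>
  inferInstanceAs (Decidable (σ i < i ∧ σ⁻¹ i < i))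

instance (σ : Equiv.Perm (Fin n)) : DecidablePred (isCdrise σ) := fun i =>
  inferInstanceAs (Decidable (σ⁻¹ i < i ∧ i < σ i))

instance (σ : Equiv.Perm (Fin n)) : DecidablePred (isCdfall σ) := fun i =>
  inferInstanceAs (Decidable (σ i < i ∧ i < σ⁻¹ i))

instance (σ : Equiv.Perm (Fin n)) : DecidablePred (isFix σ) := fun i =>
  inferInstanceAs (Decidable (σ i = i))

/-- The number of excedances of `σ`. -/
def exc (σ : Equiv.Perm (Fin n)) : ℕ := cnt fun i => i < σ i

/-- The number of antirecords of `σ`. -/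
def arec (σ : Equiv.Perm (Fin n)) : ℕ := cnt (isArec σ)

/-- The number of exclusive records of `σ`. -/
def erec (σ : Equiv.Perm (Fin n)) : ℕ := cnt (isERec σ)

/-- The number of inversions of `σ`. -/
def inversions (σ : Equiv.Perm (Fin n)) : ℕ :=
  Nat.card {p : Fin n × Fin n // p.1 < p.2 ∧ σ p.2 < σ p.1}

/-- The number of cycles of `σ` (fixed points included). -/
def cyc (σ : Equiv.Perm (Fin n)) : ℕ := σ.cycleType.card + cnt (isFix σ)

/-- The level of an index `i`: `#{j < i : σ j > i}`. -/
def levAt (σ : Equiv.Perm (Fin n)) (i : Fin n) : ℕ := cnt fun j => j < i ∧ i < σ j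

def eareccpeak (σ : Equiv.Perm (Fin n)) : ℕ := cnt fun i => isEArec σ i ∧ isCpeak σ i
def eareccdfall (σ : Equiv.Perm (Fin n)) : ℕ := cnt fun i => isEArec σ i ∧ isCdfall σ i
def ereccval (σ : Equiv.Perm (Fin n)) : ℕ := cnt fun i => isERec σ i ∧ isCval σ i
def ereccdrise (σ : Equiv.Perm (Fin n)) : ℕ := cnt fun i => isERec σ i ∧ isCdrise σ i
def nrcpeak (σ : Equiv.Perm (Fin n)) : ℕ := cnt fun i => isNrar σ i ∧ isCpeak σ i
def nrcdfall (σ : Equiv.Perm (Fin n)) : ℕ := cnt fun i => isNrar σ i ∧ isCdfall σ i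
def nrcval (σ : Equiv.Perm (Fin n)) : ℕ := cnt fun i => isNrar σ i ∧ isCval σ i
def nrcdrise (σ : Equiv.Perm (Fin n)) : ℕ := cnt fun i => isNrar σ i ∧ isCdrise σ i

/-- The number of upper crossings of `σ`. -/
def ucross (σ : Equiv.Perm (Fin n)) : ℕ := quad fun i j k l => σ i = k ∧ σ j = l
/-- The number of lower crossings of `σ`. -/
def lcross (σ : Equiv.Perm (Fin n)) : ℕ := quad fun i j k l => σ k = i ∧ σ l = j
/-- The number of upper nestings of `σ`. -/
def unest (σ : Equiv.Perm (Fin n)) : ℕ := quad fun i j k l => σ i = l ∧ σ j = k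
/-- The number of lower nestings of `σ`. -/
def lnest (σ : Equiv.Perm (Fin n)) : ℕ := quad fun i j k l => σ l = i ∧ σ k = j
/-- The number of upper joinings of `σ`. -/
def ujoin (σ : Equiv.Perm (Fin n)) : ℕ := trip fun i j l => σ i = j ∧ σ j = l
/-- The number of lower joinings of `σ`. -/
def ljoin (σ : Equiv.Perm (Fin n)) : ℕ := trip fun i j l => σ j = i ∧ σ l = j
/-- The number of upper pseudo-nestings of `σ`. -/
def upsnest (σ : Equiv.Perm (Fin n)) : ℕ := trip fun i j l => σ j = j ∧ σ i = l
/-- The number of lower pseudo-nestings of `σ`. -/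
def lpsnest (σ : Equiv.Perm (Fin n)) : ℕ := trip fun i j l => σ j = j ∧ σ l = i
/-- `psnest = upsnest (= lpsnest)`. -/
def psnest (σ : Equiv.Perm (Fin n)) : ℕ := upsnest σ

def ucrosscval (σ : Equiv.Perm (Fin n)) : ℕ :=
  quad fun i j k l => σ i = k ∧ σ j = l ∧ j < σ⁻¹ j
def ucrosscdrise (σ : Equiv.Perm (Fin n)) : ℕ :=
  quad fun i j k l => σ i = k ∧ σ j = l ∧ σ⁻¹ j < j
def lcrosscpeak (σ : Equiv.Perm (Fin n)) : ℕ :=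
  quad fun i j k l => σ k = i ∧ σ l = j ∧ σ⁻¹ k < k
def lcrosscdfall (σ : Equiv.Perm (Fin n)) : ℕ :=
  quad fun i j k l => σ k = i ∧ σ l = j ∧ k < σ⁻¹ k
def unestcval (σ : Equiv.Perm (Fin n)) : ℕ :=
  quad fun i j k l => σ i = l ∧ σ j = k ∧ j < σ⁻¹ j
def unestcdrise (σ : Equiv.Perm (Fin n)) : ℕ :=
  quad fun i j k l => σ i = l ∧ σ j = k ∧ σ⁻¹ j < j
def lnestcpeak (σ : Equiv.Perm (Fin n)) : ℕ :=
  quad fun i j k l => σ l = i ∧ σ k = j ∧ σ⁻¹ k < k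
def lnestcdfall (σ : Equiv.Perm (Fin n)) : ℕ :=
  quad fun i j k l => σ l = i ∧ σ k = j ∧ k < σ⁻¹ k

/-- `ucross (j, σ) = #{i<j<k<l : k = σ i, l = σ j}`. -/
def ucrossAt (σ : Equiv.Perm (Fin n)) (j : Fin n) : ℕ :=
  Nat.card {t : Fin n × Fin n × Fin n //
    t.1 < j ∧ j < t.2.1 ∧ t.2.1 < t.2.2 ∧ σ t.1 = t.2.1 ∧ σ j = t.2.2}

/-- `unest (j, σ) = #{i<j<k<l : k = σ j, l = σ i}`. -/
def unestAt (σ : Equiv.Perm (Fin n)) (j : Fin n) : ℕ :=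
  Nat.card {t : Fin n × Fin n × Fin n //
    t.1 < j ∧ j < t.2.1 ∧ t.2.1 < t.2.2 ∧ σ j = t.2.1 ∧ σ t.1 = t.2.2}

/-- `lcross (k, σ) = #{i<j<k<l : i = σ k, j = σ l}`. -/
def lcrossAt (σ : Equiv.Perm (Fin n)) (k : Fin n) : ℕ :=
  Nat.card {t : Fin n × Fin n × Fin n //
    t.1 < t.2.1 ∧ t.2.1 < k ∧ k < t.2.2 ∧ σ k = t.1 ∧ σ t.2.2 = t.2.1}

/-- `lnest (k, σ) = #{i<j<k<l : i = σ l, j = σ k}`. -/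
def lnestAt (σ : Equiv.Perm (Fin n)) (k : Fin n) : ℕ :=
  Nat.card {t : Fin n × Fin n × Fin n //
    t.1 < t.2.1 ∧ t.2.1 < k ∧ k < t.2.2 ∧ σ t.2.2 = t.1 ∧ σ k = t.2.1}

/-! ### Set-partition statistics -/

open Classical in
/-- The set partitions of `{1, …, n}`, encoded as the collections of their blocks. -/
def setPartitions (n : ℕ) : Finset (Finset (Finset (Fin n))) :=
  Finset.univ.filter fun P =>
    (∀ B ∈ P, B.Nonempty) ∧ (∀ i : Fin n, ∃ B ∈ P, i ∈ B) ∧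
      ∀ B ∈ P, ∀ C ∈ P, ∀ i : Fin n, i ∈ B → i ∈ C → B = C

/-- `(i, j)` is an edge of the graph `G_P`: `i < j` are consecutive elements of a
common block of `P`. -/
def arc (P : Finset (Finset (Fin n))) (i j : Fin n) : Prop :=
  i < j ∧ ∃ B ∈ P, i ∈ B ∧ j ∈ B ∧ ∀ k ∈ B, ¬(i < k ∧ k < j)

instance (P : Finset (Finset (Fin n))) (i j : Fin n) : Decidable (arc P i j) :=
  inferInstanceAs
    (Decidable (i < j ∧ ∃ B ∈ P, i ∈ B ∧ j ∈ B ∧ ∀ k ∈ B, ¬(i < k ∧ k < j)))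

/-- `i` is an opener: the smallest element of a block of size `≥ 2`. -/
def isOpener (P : Finset (Finset (Fin n))) (i : Fin n) : Prop :=
  ∃ B ∈ P, i ∈ B ∧ 2 ≤ B.card ∧ ∀ j ∈ B, i ≤ j

/-- `i` is a closer: the largest element of a block of size `≥ 2`. -/
def isCloser (P : Finset (Finset (Fin n))) (i : Fin n) : Prop :=
  ∃ B ∈ P, i ∈ B ∧ 2 ≤ B.card ∧ ∀ j ∈ B, j ≤ i

/-- `i` is an insider: a non-smallest, non-largest element of a block of size `≥ 3`. -/
def isInsider (P : Finset (Finset (Fin n))) (i : Fin n) : Prop :=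
  ∃ B ∈ P, i ∈ B ∧ 3 ≤ B.card ∧ (∃ j ∈ B, j < i) ∧ ∃ j ∈ B, i < j

/-- `i` is a singleton of `P`. -/
def isSingle (P : Finset (Finset (Fin n))) (i : Fin n) : Prop := {i} ∈ P

instance (P : Finset (Finset (Fin n))) : DecidablePred (isOpener P) := fun i =>
  inferInstanceAs (Decidable (∃ B ∈ P, i ∈ B ∧ 2 ≤ B.card ∧ ∀ j ∈ B, i ≤ j))

instance (P : Finset (Finset (Fin n))) : DecidablePred (isCloser P) := fun i =>
  inferInstanceAs (Decidable (∃ B ∈ P, i ∈ B ∧ 2 ≤ B.card ∧ ∀ j ∈ B, j ≤ i))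

instance (P : Finset (Finset (Fin n))) : DecidablePred (isInsider P) := fun i =>
  inferInstanceAs
    (Decidable (∃ B ∈ P, i ∈ B ∧ 3 ≤ B.card ∧ (∃ j ∈ B, j < i) ∧ ∃ j ∈ B, i < j))

instance (P : Finset (Finset (Fin n))) : DecidablePred (isSingle P) := fun i =>
  inferInstanceAs (Decidable ({i} ∈ P))

/-- `i` is an exclusive record of the set partition `P`: `i` has a next-larger
element `l` in its block, and for every `j < i` the next-larger element of `j` in its
block (when it exists) is smaller than `l`. -/
def isERecP (P : Finset (Finset (Fin n))) (i : Fin n) : Prop :=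
  ∃ l, arc P i l ∧ ∀ j, j < i → ∀ m, arc P j m → m < l

/-- The number of exclusive records of `P`. -/
def perecP (P : Finset (Finset (Fin n))) : ℕ := cnt (isERecP P)

/-- The number of singletons of `P`. -/
def singCount (P : Finset (Finset (Fin n))) : ℕ := cnt (isSingle P)

/-- The number of blocks of `P` of size `≥ 2`. -/
def blkCount (P : Finset (Finset (Fin n))) : ℕ :=
  Nat.card {B : Finset (Fin n) // B ∈ P ∧ 2 ≤ B.card}

def erecinP (P : Finset (Finset (Fin n))) : ℕ := cnt fun i => isInsider P i ∧ isERecP P i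
def erecopP (P : Finset (Finset (Fin n))) : ℕ := cnt fun i => isOpener P i ∧ isERecP P i
def nerecinP (P : Finset (Finset (Fin n))) : ℕ :=
  cnt fun i => isInsider P i ∧ ¬ isERecP P i
def nerecopP (P : Finset (Finset (Fin n))) : ℕ :=
  cnt fun i => isOpener P i ∧ ¬ isERecP P i

/-- `cr (j, P) = #{i<j<k<l : (i,k) ∈ G_P and (j,l) ∈ G_P}`. -/
def crAt (P : Finset (Finset (Fin n))) (j : Fin n) : ℕ :=
  Nat.card {t : Fin n × Fin n × Fin n //
    t.1 < j ∧ j < t.2.1 ∧ t.2.1 < t.2.2 ∧ arc P t.1 t.2.1 ∧ arc P j t.2.2}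

/-- `ne (j, P) = #{i<j<k<l : (i,l) ∈ G_P and (j,k) ∈ G_P}`. -/
def neAt (P : Finset (Finset (Fin n))) (j : Fin n) : ℕ :=
  Nat.card {t : Fin n × Fin n × Fin n //
    t.1 < j ∧ j < t.2.1 ∧ t.2.1 < t.2.2 ∧ arc P t.1 t.2.2 ∧ arc P j t.2.1}

/-- `qne (j, P) = #{i<j<l : (i,l) ∈ G_P}`. -/
def qneAt (P : Finset (Finset (Fin n))) (j : Fin n) : ℕ :=
  Nat.card {p : Fin n × Fin n // p.1 < j ∧ j < p.2 ∧ arc P p.1 p.2}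

/-- The total number of crossings of `P`. -/
def crP (P : Finset (Finset (Fin n))) : ℕ := quad fun i j k l => arc P i k ∧ arc P j l
/-- The number of crossings of `P` whose second index is an opener. -/
def cropP (P : Finset (Finset (Fin n))) : ℕ :=
  quad fun i j k l => arc P i k ∧ arc P j l ∧ isOpener P j
/-- The number of crossings of `P` whose second index is an insider. -/
def crinP (P : Finset (Finset (Fin n))) : ℕ :=
  quad fun i j k l => arc P i k ∧ arc P j l ∧ isInsider P j
/-- The number of nestings of `P` whose second index is an opener. -/
def neopP (P : Finset (Finset (Fin n))) : ℕ :=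
  quad fun i j k l => arc P i l ∧ arc P j k ∧ isOpener P j
/-- The number of nestings of `P` whose second index is an insider. -/
def neinP (P : Finset (Finset (Fin n))) : ℕ :=
  quad fun i j k l => arc P i l ∧ arc P j k ∧ isInsider P j
/-- The number of pseudo-nestings of `P`. -/
def psneP (P : Finset (Finset (Fin n))) : ℕ :=
  trip fun i j l => isSingle P j ∧ arc P i l

/-- The smallest element of a block, as a natural number. -/
def bmin (B : Finset (Fin n)) : ℕ := sInf {m : ℕ | ∃ i ∈ B, (i : ℕ) = m}

/-- The largest element of a block, as a natural number. -/
def bmax (B : Finset (Fin n)) : ℕ := B.sup fun i => (i : ℕ)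

/-- `ov (j, P) = #{(B₁,B₂) : j ∈ B₂, min B₁ < j < max B₁ < max B₂}`. -/
def ovAt (P : Finset (Finset (Fin n))) (j : Fin n) : ℕ :=
  Nat.card {p : Finset (Fin n) × Finset (Fin n) // p.1 ∈ P ∧ p.2 ∈ P ∧ j ∈ p.2 ∧
    bmin p.1 < (j : ℕ) ∧ (j : ℕ) < bmax p.1 ∧ bmax p.1 < bmax p.2}

/-- `cov (j, P) = #{(B₁,B₂) : j ∈ B₂, min B₁ < j < max B₂ < max B₁}`. -/
def covAt (P : Finset (Finset (Fin n))) (j : Fin n) : ℕ :=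
  Nat.card {p : Finset (Fin n) × Finset (Fin n) // p.1 ∈ P ∧ p.2 ∈ P ∧ j ∈ p.2 ∧
    bmin p.1 < (j : ℕ) ∧ (j : ℕ) < bmax p.2 ∧ bmax p.2 < bmax p.1}

/-- The number of overlaps of `P`: pairs of blocks with
`min B₁ < min B₂ < max B₁ < max B₂`. -/
def ovP (P : Finset (Finset (Fin n))) : ℕ :=
  Nat.card {p : Finset (Fin n) × Finset (Fin n) // p.1 ∈ P ∧ p.2 ∈ P ∧
    bmin p.1 < bmin p.2 ∧ bmin p.2 < bmax p.1 ∧ bmax p.1 < bmax p.2}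

/-- The number of coverings of `P`: pairs of blocks with
`min B₁ < min B₂ < max B₂ < max B₁`. -/
def covP (P : Finset (Finset (Fin n))) : ℕ :=
  Nat.card {p : Finset (Fin n) × Finset (Fin n) // p.1 ∈ P ∧ p.2 ∈ P ∧
    bmin p.1 < bmin p.2 ∧ bmin p.2 < bmax p.2 ∧ bmax p.2 < bmax p.1}

/-- The number of pseudo-coverings of `P`: pairs of blocks with
`min B₁ < min B₂ = max B₂ < max B₁`. -/
def pscovP (P : Finset (Finset (Fin n))) : ℕ :=
  Nat.card {p : Finset (Fin n) × Finset (Fin n) // p.1 ∈ P ∧ p.2 ∈ P ∧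
    bmin p.1 < bmin p.2 ∧ bmin p.2 = bmax p.2 ∧ bmax p.2 < bmax p.1}

/-- `ovin P = ∑_{j insider} ov (j, P)`. -/
def ovinP (P : Finset (Finset (Fin n))) : ℕ :=
  ∑ j ∈ Finset.univ.filter (isInsider P), ovAt P j

/-- `covin P = ∑_{j insider} cov (j, P)`. -/
def covinP (P : Finset (Finset (Fin n))) : ℕ :=
  ∑ j ∈ Finset.univ.filter (isInsider P), covAt P j

/-- The intertwining number of two (disjoint nonempty) blocks `B`, `C`: the number of
pairs `(b,c) ∈ B × C` with no element of `B ∪ C` strictly between `b` and `c`. -/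
def iota (B C : Finset (Fin n)) : ℕ :=
  Nat.card {p : Fin n × Fin n // p.1 ∈ B ∧ p.2 ∈ C ∧
    ∀ k ∈ B ∪ C, ¬(min p.1 p.2 < k ∧ k < max p.1 p.2)}

/-- The intertwining number of a set partition: the sum of `iota B₁ B₂` over the
unordered pairs of distinct blocks, here enumerated by increasing minimum. -/
def iotaTotal (P : Finset (Finset (Fin n))) : ℕ :=
  ∑ B₁ ∈ P, ∑ B₂ ∈ P, if bmin B₁ < bmin B₂ then iota B₁ B₂ else 0

end

/-! Fix `j`. Both `cr(j) + ne(j)` and `ov(j) + cov(j)` are products of two factors. The first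
counts the arcs of `G_P` passing over `j`, equivalently the blocks not containing `j` whose span
contains `j`; the second counts the arcs leaving `j`, equivalently the block of `j` when `j` is not
its maximum. Crossings and nestings split this product by comparing the right ends of the two arcs,
overlaps and coverings by comparing the maxima of the two blocks. Summing over insiders gives the
second identity; summing over openers gives the first, since a pair of blocks with
`min B₁ < min B₂` is recorded at the opener `min B₂`. -/

open Finset

section Blocks

variable {n : ℕ} {P : Finset (Finset (Fin n))} {B C : Finset (Fin n)} {i j : Fin n}

lemma natCard_eq_card_filter {α : Type*} [Fintype α] (p : α → Prop) [DecidablePred p] :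
    Nat.card {a // p a} = #(univ.filter p) := by
  rw [Nat.card_eq_fintype_card, Fintype.card_subtype]

lemma eq_of_mem_of_mem (hP : P ∈ setPartitions n) (hB : B ∈ P) (hC : C ∈ P) (hiB : i ∈ B)
    (hiC : i ∈ C) : B = C := by
  classical
  exact (mem_filter.1 hP).2.2.2 B hB C hC i hiB hiC

lemma bmin_le (hi : i ∈ B) : bmin B ≤ i := Nat.sInf_le ⟨i, hi, rfl⟩

lemma le_bmax (hi : i ∈ B) : (i : ℕ) ≤ bmax B := le_sup (f := fun i : Fin n => (i : ℕ)) hi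

lemma exists_mem_val_eq_bmin (hB : B.Nonempty) : ∃ i ∈ B, (i : ℕ) = bmin B := by
  obtain ⟨x, hx⟩ := hB
  exact Nat.sInf_mem (s := {m | ∃ i ∈ B, (i : ℕ) = m}) ⟨x, x, hx, rfl⟩

lemma exists_mem_val_eq_bmax (hB : B.Nonempty) : ∃ i ∈ B, (i : ℕ) = bmax B := by
  obtain ⟨i, hi, he⟩ := exists_mem_eq_sup B hB (fun i : Fin n => (i : ℕ))
  exact ⟨i, hi, he.symm⟩

lemma lt_bmax_iff : (j : ℕ) < bmax B ↔ ∃ b ∈ B, j < b := Finset.lt_sup_iff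

lemma nonempty_of_lt_bmax {m : ℕ} (h : m < bmax B) : B.Nonempty := by
  by_contra hB
  rw [not_nonempty_iff_eq_empty.1 hB, bmax, sup_empty] at h
  exact Nat.not_lt_zero m h

lemma bmin_lt_iff (hB : B.Nonempty) : bmin B < j ↔ ∃ a ∈ B, a < j := by
  constructor
  · obtain ⟨a, ha, he⟩ := exists_mem_val_eq_bmin hB
    exact fun h => ⟨a, ha, Fin.lt_def.2 (he ▸ h)⟩
  · rintro ⟨a, ha, haj⟩
    exact (bmin_le ha).trans_lt haj

lemma bmax_injOn (hP : P ∈ setPartitions n) (hB : B ∈ P) (hC : C ∈ P) (hBne : B.Nonempty)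
    (hCne : C.Nonempty) (h : bmax B = bmax C) : B = C := by
  obtain ⟨b, hb, hbv⟩ := exists_mem_val_eq_bmax hBne
  obtain ⟨c, hc, hcv⟩ := exists_mem_val_eq_bmax hCne
  obtain rfl : b = c := Fin.ext (by omega)
  exact eq_of_mem_of_mem hP hB hC hb hc

lemma bmax_ne_iff_notMem (hP : P ∈ setPartitions n) (hB : B ∈ P) (hC : C ∈ P) (hBne : B.Nonempty)
    (hjC : j ∈ C) : bmax B ≠ bmax C ↔ j ∉ B := by
  constructor
  · rintro h hjB
    exact h (by rw [eq_of_mem_of_mem hP hB hC hjB hjC])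
  · rintro hjB h
    exact hjB (bmax_injOn hP hB hC hBne ⟨j, hjC⟩ h ▸ hjC)

lemma bmin_eq_of_isOpener (hP : P ∈ setPartitions n) (hB : B ∈ P) (hjB : j ∈ B)
    (hj : isOpener P j) : bmin B = j := by
  obtain ⟨B', hB', hjB', -, hmin⟩ := hj
  obtain rfl := eq_of_mem_of_mem hP hB' hB hjB' hjB
  obtain ⟨a, ha, hav⟩ := exists_mem_val_eq_bmin ⟨j, hjB⟩
  have := Fin.le_def.1 (hmin a ha)
  have := bmin_le hjB
  omega

lemma exists_isOpener_val_eq_bmin (hB : B ∈ P) (h : bmin B < bmax B) :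
    ∃ a, isOpener P a ∧ (a : ℕ) = bmin B := by
  have hBne := nonempty_of_lt_bmax h
  obtain ⟨a, ha, hav⟩ := exists_mem_val_eq_bmin hBne
  obtain ⟨b, hb, hbv⟩ := exists_mem_val_eq_bmax hBne
  have hab : a ≠ b := fun hab => by rw [hab] at hav; omega
  exact ⟨a, ⟨B, hB, ha, one_lt_card.2 ⟨a, ha, b, hb, hab⟩,
    fun x hx => Fin.le_def.2 (hav ▸ bmin_le hx)⟩, hav⟩

end Blocks

section NextPrev

variable {n : ℕ} {P : Finset (Finset (Fin n))} {B : Finset (Fin n)} {j x y : Fin n}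

/-- The least element of `B` above `j`, or `j` itself if there is none. -/
def nextIn (B : Finset (Fin n)) (j : Fin n) : Fin n :=
  if h : (B.filter (j < ·)).Nonempty then (B.filter (j < ·)).min' h else j

/-- The greatest element of `B` below `j`, or `j` itself if there is none. -/
def prevIn (B : Finset (Fin n)) (j : Fin n) : Fin n :=
  if h : (B.filter (· < j)).Nonempty then (B.filter (· < j)).max' h else j

lemma nextIn_mem_lt (h : ∃ b ∈ B, j < b) : nextIn B j ∈ B ∧ j < nextIn B j := by
  obtain ⟨b, hb, hjb⟩ := h
  have hne : (B.filter (j < ·)).Nonempty := ⟨b, mem_filter.2 ⟨hb, hjb⟩⟩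
  rw [nextIn, dif_pos hne]
  exact mem_filter.1 (min'_mem _ hne)

lemma nextIn_le (hb : y ∈ B) (hjy : j < y) : nextIn B j ≤ y := by
  have hy : y ∈ B.filter (j < ·) := mem_filter.2 ⟨hb, hjy⟩
  rw [nextIn, dif_pos ⟨y, hy⟩]
  exact min'_le _ y hy

lemma prevIn_mem_lt (h : ∃ a ∈ B, a < j) : prevIn B j ∈ B ∧ prevIn B j < j := by
  obtain ⟨a, ha, haj⟩ := h
  have hne : (B.filter (· < j)).Nonempty := ⟨a, mem_filter.2 ⟨ha, haj⟩⟩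
  rw [prevIn, dif_pos hne]
  exact mem_filter.1 (max'_mem _ hne)

lemma le_prevIn (ha : x ∈ B) (hxj : x < j) : x ≤ prevIn B j := by
  have hx : x ∈ B.filter (· < j) := mem_filter.2 ⟨ha, hxj⟩
  rw [prevIn, dif_pos ⟨x, hx⟩]
  exact le_max' _ x hx

lemma nextIn_eq (hy : y ∈ B) (hjy : j < y) (hgap : ∀ k ∈ B, ¬(j < k ∧ k < y)) :
    nextIn B j = y := by
  obtain ⟨hmem, hlt⟩ := nextIn_mem_lt ⟨y, hy, hjy⟩
  exact (nextIn_le hy hjy).eq_of_not_lt fun h => hgap _ hmem ⟨hlt, h⟩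

lemma prevIn_eq (hx : x ∈ B) (hxj : x < j) (hgap : ∀ k ∈ B, ¬(x < k ∧ k < j)) :
    prevIn B j = x := by
  obtain ⟨hmem, hlt⟩ := prevIn_mem_lt ⟨x, hx, hxj⟩
  exact ((le_prevIn hx hxj).eq_of_not_lt fun h => hgap _ hmem ⟨h, hlt⟩).symm

lemma arc_nextIn (hB : B ∈ P) (hj : j ∈ B) (h : ∃ b ∈ B, j < b) : arc P j (nextIn B j) := by
  obtain ⟨hmem, hlt⟩ := nextIn_mem_lt h
  exact ⟨hlt, B, hB, hj, hmem, fun k hk hjk => not_lt_of_ge (nextIn_le hk hjk.1) hjk.2⟩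

lemma arc_prevIn_nextIn (hB : B ∈ P) (hj : j ∉ B) (ha : ∃ a ∈ B, a < j) (hb : ∃ b ∈ B, j < b) :
    arc P (prevIn B j) (nextIn B j) := by
  obtain ⟨hpmem, hplt⟩ := prevIn_mem_lt ha
  obtain ⟨hnmem, hnlt⟩ := nextIn_mem_lt hb
  refine ⟨hplt.trans hnlt, B, hB, hpmem, hnmem, fun k hk hbetween => ?_⟩
  rcases lt_trichotomy k j with hkj | rfl | hjk
  · exact not_lt_of_ge (le_prevIn hk hkj) hbetween.1
  · exact hj hk
  · exact not_lt_of_ge (nextIn_le hk hjk) hbetween.2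

end NextPrev

section LocalCount

variable {n : ℕ} {P : Finset (Finset (Fin n))} {i j x y : Fin n}

def straddlingArcs (P : Finset (Finset (Fin n))) (j : Fin n) : Finset (Fin n × Fin n) :=
  univ.filter fun a => a.1 < j ∧ j < a.2 ∧ arc P a.1 a.2

def outArcs (P : Finset (Finset (Fin n))) (j : Fin n) : Finset (Fin n) :=
  univ.filter (arc P j)

noncomputable def straddlingBlocks (P : Finset (Finset (Fin n))) (j : Fin n) :
    Finset (Finset (Fin n)) :=
  P.filter fun B => j ∉ B ∧ bmin B < j ∧ (j : ℕ) < bmax B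

noncomputable def outBlocks (P : Finset (Finset (Fin n))) (j : Fin n) :
    Finset (Finset (Fin n)) :=
  P.filter fun B => j ∈ B ∧ (j : ℕ) < bmax B

lemma arc_ne_of_straddle (hP : P ∈ setPartitions n) (hix : arc P i x) (hij : i < j)
    (hjx : j < x) (hjy : arc P j y) : x ≠ y := by
  rintro rfl
  obtain ⟨-, B, hB, -, hxB, hgap⟩ := hix
  obtain ⟨-, C, hC, hjC, hxC, -⟩ := hjy
  obtain rfl := eq_of_mem_of_mem hP hB hC hxB hxC
  exact hgap j hjC ⟨hij, hjx⟩

lemma crAt_eq_card_filter : crAt P j = #((straddlingArcs P j ×ˢ outArcs P j).filter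
    fun p => p.1.2 < p.2) := by
  rw [crAt, natCard_eq_card_filter]
  refine card_nbij' (fun t => ((t.1, t.2.1), t.2.2)) (fun p => (p.1.1, p.1.2, p.2))
    ?_ ?_ (fun _ _ => rfl) (fun _ _ => rfl) <;>
  · intro t ht
    simp only [mem_coe, mem_product, straddlingArcs, outArcs, mem_filter, mem_univ,
      true_and] at ht ⊢
    tauto

lemma neAt_eq_card_filter (hP : P ∈ setPartitions n) : neAt P j =
    #((straddlingArcs P j ×ˢ outArcs P j).filter fun p => ¬p.1.2 < p.2) := by
  rw [neAt, natCard_eq_card_filter]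
  refine card_nbij' (fun t => ((t.1, t.2.2), t.2.1)) (fun p => (p.1.1, p.2, p.1.2))
    ?_ ?_ (fun _ _ => rfl) (fun _ _ => rfl)
  · intro t ht
    simp only [mem_coe, mem_product, straddlingArcs, outArcs, mem_filter, mem_univ,
      true_and] at ht ⊢
    obtain ⟨hij, hjk, hkl, hil, hjk'⟩ := ht
    exact ⟨⟨⟨hij, hjk.trans hkl, hil⟩, hjk'⟩, not_lt_of_gt hkl⟩
  · rintro p hp
    simp only [mem_coe, mem_product, straddlingArcs, outArcs, mem_filter, mem_univ,
      true_and] at hp ⊢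
    obtain ⟨⟨⟨hij, hjx, hix⟩, hjy⟩, hxy⟩ := hp
    have hyx := lt_of_le_of_ne (not_lt.1 hxy) (arc_ne_of_straddle hP hix hij hjx hjy).symm
    exact ⟨hij, hjy.1, hyx, hix, hjy⟩

lemma crAt_add_neAt (hP : P ∈ setPartitions n) :
    crAt P j + neAt P j = #(straddlingArcs P j ×ˢ outArcs P j) := by
  rw [crAt_eq_card_filter, neAt_eq_card_filter hP, card_filter_add_card_filter_not]

lemma ovAt_eq_card_filter (hP : P ∈ setPartitions n) : ovAt P j =
    #((straddlingBlocks P j ×ˢ outBlocks P j).filter fun p => bmax p.1 < bmax p.2) := by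
  rw [ovAt, natCard_eq_card_filter]
  congr 1
  ext p
  simp only [straddlingBlocks, outBlocks, mem_filter, mem_product, mem_univ, true_and]
  constructor
  · rintro ⟨h₁, h₂, hj₂, hmin, hmax₁, hlt⟩
    have hj₁ := (bmax_ne_iff_notMem hP h₁ h₂ (nonempty_of_lt_bmax hmax₁) hj₂).1 hlt.ne
    exact ⟨⟨⟨h₁, hj₁, hmin, hmax₁⟩, h₂, hj₂, hmax₁.trans hlt⟩, hlt⟩
  · rintro ⟨⟨⟨h₁, -, hmin, hmax₁⟩, h₂, hj₂, -⟩, hlt⟩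
    exact ⟨h₁, h₂, hj₂, hmin, hmax₁, hlt⟩

lemma covAt_eq_card_filter (hP : P ∈ setPartitions n) : covAt P j =
    #((straddlingBlocks P j ×ˢ outBlocks P j).filter fun p => ¬bmax p.1 < bmax p.2) := by
  rw [covAt, natCard_eq_card_filter]
  congr 1
  ext p
  simp only [straddlingBlocks, outBlocks, mem_filter, mem_product, mem_univ, true_and]
  constructor
  · rintro ⟨h₁, h₂, hj₂, hmin, hmax₂, hlt⟩
    have hmax₁ := hmax₂.trans hlt
    have hj₁ := (bmax_ne_iff_notMem hP h₁ h₂ (nonempty_of_lt_bmax hmax₁) hj₂).1 hlt.ne'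
    exact ⟨⟨⟨h₁, hj₁, hmin, hmax₁⟩, h₂, hj₂, hmax₂⟩, not_lt_of_gt hlt⟩
  · rintro ⟨⟨⟨h₁, hj₁, hmin, hmax₁⟩, h₂, hj₂, hmax₂⟩, hnlt⟩
    have hne := (bmax_ne_iff_notMem hP h₁ h₂ (nonempty_of_lt_bmax hmax₁) hj₂).2 hj₁
    exact ⟨h₁, h₂, hj₂, hmin, hmax₂, lt_of_le_of_ne (not_lt.1 hnlt) hne.symm⟩

lemma ovAt_add_covAt (hP : P ∈ setPartitions n) :
    ovAt P j + covAt P j = #(straddlingBlocks P j ×ˢ outBlocks P j) := by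
  rw [ovAt_eq_card_filter hP, covAt_eq_card_filter hP, card_filter_add_card_filter_not]

lemma card_straddlingBlocks (hP : P ∈ setPartitions n) :
    #(straddlingBlocks P j) = #(straddlingArcs P j) := by
  refine card_bij (fun B _ => (prevIn B j, nextIn B j)) ?_ ?_ ?_
  · intro B hB
    simp only [straddlingBlocks, mem_filter] at hB
    obtain ⟨hBP, hjB, hmin, hmax⟩ := hB
    have hlo := (bmin_lt_iff (nonempty_of_lt_bmax hmax)).1 hmin
    have hhi := lt_bmax_iff.1 hmax
    simp only [straddlingArcs, mem_filter, mem_univ, true_and]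
    exact ⟨(prevIn_mem_lt hlo).2, (nextIn_mem_lt hhi).2, arc_prevIn_nextIn hBP hjB hlo hhi⟩
  · intro B hB C hC h
    simp only [straddlingBlocks, mem_filter] at hB hC
    simp only [Prod.mk.injEq] at h
    exact eq_of_mem_of_mem hP hB.1 hC.1 (nextIn_mem_lt (lt_bmax_iff.1 hB.2.2.2)).1
      (h.2 ▸ (nextIn_mem_lt (lt_bmax_iff.1 hC.2.2.2)).1)
  · intro a ha
    simp only [straddlingArcs, mem_filter, mem_univ, true_and] at ha
    obtain ⟨hij, hjx, -, B, hB, hiB, hxB, hgap⟩ := ha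
    refine ⟨B, ?_, ?_⟩
    · simp only [straddlingBlocks, mem_filter]
      exact ⟨hB, fun hjB => hgap j hjB ⟨hij, hjx⟩, (bmin_le hiB).trans_lt hij,
        (Fin.lt_def.1 hjx).trans_le (le_bmax hxB)⟩
    · rw [prevIn_eq hiB hij fun k hk h => hgap k hk ⟨h.1, h.2.trans hjx⟩,
        nextIn_eq hxB hjx fun k hk h => hgap k hk ⟨hij.trans h.1, h.2⟩]

lemma card_outBlocks (hP : P ∈ setPartitions n) : #(outBlocks P j) = #(outArcs P j) := by
  refine card_bij (fun B _ => nextIn B j) ?_ ?_ ?_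
  · intro B hB
    simp only [outBlocks, mem_filter] at hB
    simp only [outArcs, mem_filter, mem_univ, true_and]
    exact arc_nextIn hB.1 hB.2.1 (lt_bmax_iff.1 hB.2.2)
  · intro B hB C hC h
    simp only [outBlocks, mem_filter] at hB hC
    exact eq_of_mem_of_mem hP hB.1 hC.1 (nextIn_mem_lt (lt_bmax_iff.1 hB.2.2)).1
      (h ▸ (nextIn_mem_lt (lt_bmax_iff.1 hC.2.2)).1)
  · intro y hy
    simp only [outArcs, mem_filter, mem_univ, true_and] at hy
    obtain ⟨hjy, B, hB, hjB, hyB, hgap⟩ := hy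
    refine ⟨B, ?_, nextIn_eq hyB hjy hgap⟩
    simp only [outBlocks, mem_filter]
    exact ⟨hB, hjB, (Fin.lt_def.1 hjy).trans_le (le_bmax hyB)⟩

theorem crAt_add_neAt_eq_ovAt_add_covAt (hP : P ∈ setPartitions n) (j : Fin n) :
    crAt P j + neAt P j = ovAt P j + covAt P j := by
  rw [crAt_add_neAt hP, ovAt_add_covAt hP, card_product, card_product,
    card_straddlingBlocks hP, card_outBlocks hP]

end LocalCount

section Splitting

variable {n : ℕ} {P : Finset (Finset (Fin n))}

lemma quad_and_eq_sum (C₁ C₂ : Fin n → Fin n → Fin n → Fin n → Prop) (Q : Fin n → Prop)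
    [DecidablePred Q] :
    quad (fun i j k l => C₁ i j k l ∧ C₂ i j k l ∧ Q j) =
      ∑ j ∈ univ.filter Q, Nat.card {t : Fin n × Fin n × Fin n //
        t.1 < j ∧ j < t.2.1 ∧ t.2.1 < t.2.2 ∧ C₁ t.1 j t.2.1 t.2.2 ∧ C₂ t.1 j t.2.1 t.2.2} := by
  classical
  rw [quad, natCard_eq_card_filter, card_eq_sum_card_fiberwise (f := fun q => q.2.1)
    (t := univ.filter Q) fun q hq => by simp_all]
  refine sum_congr rfl fun j hj => ?_
  rw [natCard_eq_card_filter]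
  refine card_nbij' (fun q => (q.1, q.2.2)) (fun t => (t.1, j, t.2)) ?_ ?_ ?_ ?_
  · rintro q hq
    simp only [coe_filter, mem_filter, mem_univ, true_and, Set.mem_ofPred_eq] at hq ⊢
    obtain ⟨⟨h₁, h₂, h₃, hC₁, hC₂, -⟩, rfl⟩ := hq
    exact ⟨h₁, h₂, h₃, hC₁, hC₂⟩
  · rintro t ht
    simp only [coe_filter, mem_filter, mem_univ, true_and, and_true, Set.mem_ofPred_eq]
      at hj ht ⊢
    exact ⟨ht.1, ht.2.1, ht.2.2.1, ht.2.2.2.1, ht.2.2.2.2, hj⟩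
  · rintro q hq
    simp only [coe_filter, mem_filter, Set.mem_ofPred_eq] at hq
    simp [← hq.2]
  · intro t _
    rfl

lemma card_pairs_eq_sum_isOpener (hP : P ∈ setPartitions n)
    (R : Finset (Fin n) × Finset (Fin n) → ℕ → Prop) (hR : ∀ p m, R p m → m < bmax p.2) :
    Nat.card {p : Finset (Fin n) × Finset (Fin n) // p.1 ∈ P ∧ p.2 ∈ P ∧
        bmin p.1 < bmin p.2 ∧ R p (bmin p.2)} =
      ∑ j ∈ univ.filter (isOpener P),
        Nat.card {p : Finset (Fin n) × Finset (Fin n) // p.1 ∈ P ∧ p.2 ∈ P ∧ j ∈ p.2 ∧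
          bmin p.1 < (j : ℕ) ∧ R p (j : ℕ)} := by
  classical
  have hmaps : ∀ p ∈ univ.filter (fun p : Finset (Fin n) × Finset (Fin n) => p.1 ∈ P ∧
      p.2 ∈ P ∧ bmin p.1 < bmin p.2 ∧ R p (bmin p.2)),
      bmin p.2 ∈ (univ.filter (isOpener P)).map Fin.valEmbedding := by
    intro p hp
    simp only [mem_filter, mem_univ, true_and] at hp
    obtain ⟨a, ha, hav⟩ := exists_isOpener_val_eq_bmin hp.2.1 (hR _ _ hp.2.2.2)
    exact mem_map.2 ⟨a, mem_filter.2 ⟨mem_univ a, ha⟩, hav⟩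
  rw [natCard_eq_card_filter, card_eq_sum_card_fiberwise hmaps, sum_map]
  refine sum_congr rfl fun j hj => ?_
  rw [natCard_eq_card_filter, filter_filter]
  congr 1
  ext p
  simp only [mem_filter, mem_univ, true_and, Fin.valEmbedding_apply] at hj ⊢
  constructor
  · rintro ⟨⟨h₁, h₂, hlt, hRp⟩, hmin⟩
    obtain ⟨a, ha, hav⟩ := exists_mem_val_eq_bmin (nonempty_of_lt_bmax (hR _ _ hRp))
    obtain rfl : a = j := Fin.ext (hav.trans hmin)
    exact ⟨h₁, h₂, ha, hmin ▸ hlt, hmin ▸ hRp⟩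
  · rintro ⟨h₁, h₂, hj₂, hlt, hRp⟩
    rw [bmin_eq_of_isOpener hP h₂ hj₂ hj]
    exact ⟨⟨h₁, h₂, hlt, hRp⟩, rfl⟩

end Splitting

open Classical in
/-- Lemma 3.5 of Sokal–Zeng:
crossings + nestings = overlaps + coverings. -/
theorem statement17 (n : ℕ) (P : Finset (Finset (Fin n)))
    (hP : P ∈ setPartitions n) :
    cropP P + neopP P = ovP P + covP P ∧ crinP P + neinP P = ovinP P + covinP P := by
  have hov : ovP P = ∑ j ∈ univ.filter (isOpener P), ovAt P j :=
    card_pairs_eq_sum_isOpener hP (fun p m => m < bmax p.1 ∧ bmax p.1 < bmax p.2)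
      fun _ _ h => h.1.trans h.2
  have hcov : covP P = ∑ j ∈ univ.filter (isOpener P), covAt P j :=
    card_pairs_eq_sum_isOpener hP (fun p m => m < bmax p.2 ∧ bmax p.2 < bmax p.1)
      fun _ _ h => h.1
  constructor
  · rw [cropP, neopP, quad_and_eq_sum, quad_and_eq_sum, hov, hcov, ← sum_add_distrib,
      ← sum_add_distrib]
    exact sum_congr rfl fun j _ => crAt_add_neAt_eq_ovAt_add_covAt hP j
  · rw [crinP, neinP, quad_and_eq_sum, quad_and_eq_sum, ovinP, covinP, ← sum_add_distrib,
      ← sum_add_distrib]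
    exact sum_congr rfl fun j _ => crAt_add_neAt_eq_ovAt_add_covAt hP j

end Paper
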